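/- arXiv:1810.03998 — 3 statements merged into one kernel-verified Lean document; each statement's English description precedes it below -/
import Mathlib

section
/- Let X be a Banach space with a non-degenerate bilinear form, C compact on X with adjoint C', M closed densely defined with adjoint M'. Assume the homogeneous problem has only the trivial solution in the sense: if v ∈ M'[ker(I+C')] satisfies Mv = 0 then v = 0. Let (uₙ), (vₙ) be sequences with vₙ ∈ M'[ker(I+C')] (a finite-dimensional space), satisfying (I+C)uₙ + Mvₙ = fₙ with (fₙ) bounded. If ‖vₙ‖/max(‖uₙ‖,1) → ∞ along a subsequence, then a contradiction arises; hence ‖vₙ‖ ≤ K(1 + ‖uₙ‖) for some constant K. -/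
/-!
Restricted to the finite-dimensional space `S = M'[ker (I + C')]`, the operator `M` is an
injective linear map, hence bounded below: `‖v‖ ≤ K ‖M v‖` on `S`. Since
`M vₙ = fₙ - (I + C) uₙ` with `(fₙ)` bounded and `C` bounded, this gives the linear bound
on `‖vₙ‖` in terms of `‖uₙ‖` directly.
-/

theorem LinearPMap.setOf_exists_map_eq_of_apply_eq_zero {R E F G : Type*} [Ring R]
    [AddCommGroup E] [Module R E] [AddCommGroup F] [Module R F] [AddCommGroup G] [Module R G]
    (f : E →ₗ.[R] F) (A : E →ₗ[R] G) :
    {x : F | ∃ v : f.domain, A v = 0 ∧ f v = x} =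
      ((LinearMap.ker (A ∘ₗ f.domain.subtype)).map f.toFun : Set F) := by
  ext x
  simp [LinearPMap.toFun_eq_coe]

theorem LinearPMap.exists_norm_le_mul_norm_of_finiteDimensional {𝕜 E F : Type*}
    [NontriviallyNormedField 𝕜] [CompleteSpace 𝕜] [NormedAddCommGroup E] [NormedSpace 𝕜 E]
    [NormedAddCommGroup F] [NormedSpace 𝕜 F] (f : E →ₗ.[𝕜] F) (T : Submodule 𝕜 E)
    [FiniteDimensional 𝕜 T] (hT : T ≤ f.domain)
    (hinj : ∀ x : f.domain, (x : E) ∈ T → f x = 0 → (x : E) = 0) :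
    ∃ K : ℝ, 0 ≤ K ∧ ∀ x : f.domain, (x : E) ∈ T → ‖(x : E)‖ ≤ K * ‖f x‖ := by
  let L : T →ₗ[𝕜] F := f.toFun ∘ₗ Submodule.inclusion hT
  have hker : LinearMap.ker L = ⊥ :=
    LinearMap.ker_eq_bot'.mpr fun y hy => Subtype.ext (hinj _ y.2 hy)
  obtain ⟨K, -, hK⟩ := L.exists_antilipschitzWith hker
  exact ⟨K, K.2, fun x hx => hK.le_mul_norm L.map_zero ⟨x, hx⟩⟩

theorem v_growth_bound_general
    {X : Type*} [NormedAddCommGroup X] [NormedSpace ℂ X]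
    (C C' : X →L[ℂ] X)
    (M M' : X →ₗ.[ℂ] X)
    -- the set `S = M'[ker (I + C')]`:
    (S : Set X)
    (hS : S = {x : X | ∃ v' : M'.domain, ((v' : X) + C' v' = 0) ∧ M' v' = x})
    -- `S` lies in the domain of `M`, and is finite-dimensional:
    (hSdom : S ⊆ (M.domain : Set X))
    (hSfin : FiniteDimensional ℂ (Submodule.span ℂ S))
    -- triviality of the homogeneous problem on `S`:
    (htriv : ∀ x ∈ S, ∀ hx : x ∈ M.domain, M ⟨x, hx⟩ = 0 → x = 0)
    (u v f : ℕ → X)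
    (hvS : ∀ n, v n ∈ S)
    (heq : ∀ n, u n + C (u n) + M ⟨v n, hSdom (hvS n)⟩ = f n)
    (hfbdd : ∃ c : ℝ, ∀ n, ‖f n‖ ≤ c) :
    ∃ K : ℝ, ∀ n, ‖v n‖ ≤ K * (1 + ‖u n‖) := by
  set T := (LinearMap.ker ((LinearMap.id + C'.toLinearMap) ∘ₗ M'.domain.subtype)).map M'.toFun
  have hST : S = T := hS.trans (M'.setOf_exists_map_eq_of_apply_eq_zero (.id + C'.toLinearMap))
  subst hST
  have : FiniteDimensional ℂ T := by rwa [Submodule.span_eq] at hSfin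
  obtain ⟨K, hK0, hK⟩ := M.exists_norm_le_mul_norm_of_finiteDimensional T hSdom
    fun x hx => htriv x hx x.2
  obtain ⟨c, hc⟩ := hfbdd
  have hc0 : 0 ≤ c := (norm_nonneg _).trans (hc 0)
  refine ⟨K * (c + 1 + ‖C‖), fun n => ?_⟩
  have hMv : M ⟨v n, hSdom (hvS n)⟩ = f n - (u n + C (u n)) := eq_sub_of_add_eq' (heq n)
  have hCu : ‖C (u n)‖ ≤ ‖C‖ * ‖u n‖ := C.le_opNorm _
  calc ‖v n‖ ≤ K * ‖f n - (u n + C (u n))‖ := hMv ▸ hK ⟨v n, _⟩ (hvS n)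
    _ ≤ K * (c + (‖u n‖ + ‖C‖ * ‖u n‖)) := by
      gcongr
      exact (norm_sub_le _ _).trans (add_le_add (hc n) ((norm_add_le _ _).trans (by gcongr)))
    _ ≤ K * (c + 1 + ‖C‖) * (1 + ‖u n‖) := by
      rw [mul_assoc]
      gcongr
      nlinarith [norm_nonneg (u n), norm_nonneg C]

/-- Step 3° of the proof of Theorem 2: under the triviality of the homogeneous
problem on `M'[ker (I + C')]`, the sequence `vₙ ∈ M'[ker (I + C')]` cannot grow
much faster than `uₙ`; one has a bound `‖vₙ‖ ≤ K (1 + ‖uₙ‖)`. -/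
theorem v_growth_bound
    {X : Type*} [NormedAddCommGroup X] [NormedSpace ℂ X] [CompleteSpace X]
    (B : X →ₗ[ℂ] X →ₗ[ℂ] ℂ)
    (hB : ∀ u : X, (∀ v : X, B u v = 0) → u = 0)
    (C C' : X →L[ℂ] X) (hC : IsCompactOperator C)
    (hCadj : ∀ u v : X, B (C u) v = B u (C' v))
    (M M' : X →ₗ.[ℂ] X)
    (hMdense : Dense (M.domain : Set X)) (hMclosed : M.IsClosed)
    (hMadj : ∀ (v : M.domain) (v' : M'.domain), B (M v) v' = B v (M' v'))
    -- the set `S = M'[ker (I + C')]`: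
    (S : Set X)
    (hS : S = {x : X | ∃ v' : M'.domain, ((v' : X) + C' v' = 0) ∧ M' v' = x})
    -- `S` lies in the domain of `M`, and is finite-dimensional:
    (hSdom : S ⊆ (M.domain : Set X))
    (hSfin : FiniteDimensional ℂ (Submodule.span ℂ S))
    -- triviality of the homogeneous problem on `S`:
    (htriv : ∀ x ∈ S, ∀ hx : x ∈ M.domain, M ⟨x, hx⟩ = 0 → x = 0)
    (u v f : ℕ → X)
    (hvS : ∀ n, v n ∈ S)
    (heq : ∀ n, u n + C (u n) + M ⟨v n, hSdom (hvS n)⟩ = f n)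
    (hfbdd : ∃ c : ℝ, ∀ n, ‖f n‖ ≤ c) :
    ∃ K : ℝ, ∀ n, ‖v n‖ ≤ K * (1 + ‖u n‖) :=
  v_growth_bound_general C C' M M' S hS hSdom hSfin htriv u v f hvS heq hfbdd
end

section
/- Let H be a complex Hilbert space, F : H → H and G : dom(G) ⊆ H → H linear with dom(G) dense, and suppose there is a bilinear pairing ⟨·,·⟩ on H with ⟨w,w⟩ = 0 ⟹ w = 0, with respect to which F has adjoint F' and G has adjoint G'. Define 𝓕 = { f ∈ H : ∃ u ∈ range(I+F'), ∃ v ∈ G'[ker(I+F')] ∩ dom(G), (I+F)u + Gv = f }. If 𝓕 = H, then ker(I+F') ∩ ker(G') = {0}. -/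
/-! An `x ∈ ker (I + F') ∩ ker G'` is `B`-orthogonal to `(I + F) u` and to `G v` for all `u`, `v`,
by moving the operators across the pairing. Since every `f` is such a sum, `x` is orthogonal to
everything, in particular `B x x = 0`, so `x = 0`. -/

section Pairing

variable {R M : Type*} [CommRing R] [AddCommGroup M] [Module R M] (B : M →ₗ[R] M →ₗ[R] R)

theorem LinearMap.apply_add_apply_eq_zero_of_add_adjoint_eq_zero {F F' : M →ₗ[R] M}
    (hFadj : ∀ u v : M, B (F u) v = B u (F' v)) {x : M} (hx : x + F' x = 0) (u : M) :
    B (u + F u) x = 0 := by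
  rw [map_add, LinearMap.add_apply, hFadj, ← map_add, hx, map_zero]

theorem LinearMap.apply_linearPMap_eq_zero_of_adjoint_eq_zero {G G' : M →ₗ.[R] M}
    (hGadj : ∀ (v : G.domain) (v' : G'.domain), B (G v) v' = B v (G' v'))
    {x : G'.domain} (hx : G' x = 0) (v : G.domain) : B (G v) x = 0 := by
  rw [hGadj, hx, LinearMap.map_zero]

end Pairing

theorem solvable_for_all_implies_trivial_kernel_intersection_general
    {H : Type*} [NormedAddCommGroup H] [InnerProductSpace ℂ H]
    (B : H →ₗ[ℂ] H →ₗ[ℂ] ℂ)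
    (hBdef : ∀ w : H, B w w = 0 → w = 0)
    (F F' : H →L[ℂ] H)
    (hFadj : ∀ u v : H, B (F u) v = B u (F' v))
    (G G' : H →ₗ.[ℂ] H)
    (hGadj : ∀ (v : G.domain) (v' : G'.domain), B (G v) v' = B v (G' v'))
    -- `𝓕 = H` : every `f` is solvable with the structured data
    (hall : ∀ f : H, ∃ u : H, (∃ u' : H, u = u' + F' u') ∧
      ∃ v : G.domain, (∃ w : G'.domain, ((w : H) + F' w = 0) ∧ (v : H) = G' w) ∧
        u + F u + G v = f) :
    ∀ x : H, ∀ hx : x ∈ G'.domain, x + F' x = 0 → G' ⟨x, hx⟩ = 0 → x = 0 := by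
  intro x hx hxF hxG
  obtain ⟨u, -, v, -, hsol⟩ := hall x
  apply hBdef
  have hFu : B (u + F u) x = 0 :=
    B.apply_add_apply_eq_zero_of_add_adjoint_eq_zero (F := F.toLinearMap) hFadj hxF u
  have hGv : B (G v) x = 0 :=
    B.apply_linearPMap_eq_zero_of_adjoint_eq_zero (x := ⟨x, hx⟩) hGadj hxG v
  calc B x x = B (u + F u) x + B (G v) x := by rw [← LinearMap.add_apply, ← map_add, hsol]
    _ = 0 := by rw [hFu, hGv, add_zero]

/-- The 'only if' direction of the solubility theorem in a Hilbert space `H`: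
if every `f ∈ H` is of the form `(I + F) u + G v` with `u ∈ range (I + F')` and
`v ∈ G'[ker (I + F')]`, then `ker (I + F') ∩ ker G' = {0}`. -/
theorem solvable_for_all_implies_trivial_kernel_intersection
    {H : Type*} [NormedAddCommGroup H] [InnerProductSpace ℂ H] [CompleteSpace H]
    (B : H →ₗ[ℂ] H →ₗ[ℂ] ℂ)
    (hBdef : ∀ w : H, B w w = 0 → w = 0)
    (F F' : H →L[ℂ] H)
    (hFadj : ∀ u v : H, B (F u) v = B u (F' v))
    (G G' : H →ₗ.[ℂ] H)
    (hGdense : Dense (G.domain : Set H))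
    (hGadj : ∀ (v : G.domain) (v' : G'.domain), B (G v) v' = B v (G' v'))
    -- `G'` is defined on `ker (I + F')`:
    (hker : ∀ x : H, x + F' x = 0 → x ∈ G'.domain)
    -- `𝓕 = H` : every `f` is solvable with the structured data
    (hall : ∀ f : H, ∃ u : H, (∃ u' : H, u = u' + F' u') ∧
      ∃ v : G.domain, (∃ w : G'.domain, ((w : H) + F' w = 0) ∧ (v : H) = G' w) ∧
        u + F u + G v = f) :
    ∀ x : H, ∀ hx : x ∈ G'.domain, x + F' x = 0 → G' ⟨x, hx⟩ = 0 → x = 0 :=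
  solvable_for_all_implies_trivial_kernel_intersection_general B hBdef F F' hFadj G G' hGadj hall
end

section
/- Let X be a Banach space with pairing ⟨·,·⟩ satisfying ⟨w,w⟩ = 0 ⟹ w = 0, let C be compact on X with compact adjoint C', and M closed densely defined with adjoint M'. Then any solution (u, v) of (I + C)u + Mv = f with u ∈ range(I + C') and v ∈ M'[ker(I + C')] is unique in range(I + C') × M'[ker(I + C')]: if (u₁, v₁) and (u₂, v₂) are two such solutions, then u₁ = u₂ and v₁ = v₂. -/
/-!
With `B` nondegenerate on the diagonal and `C, C'` resp. `M, M'` adjoint with respect to `B`,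
the homogeneous problem `(I + C) u + M v = 0` has only the trivial solution in
`range (I + C') × M'[ker (I + C')]`: writing `v = M' w` with `(I + C') w = 0`, one gets
`B v v = B (M v) w = -B ((I + C) u) w = -B u ((I + C') w) = 0`, so `v = 0`; then `(I + C) u = 0`
and, writing `u = (I + C') u'`, `B u u = B ((I + C) u) u' = 0`, so `u = 0`.
Uniqueness follows by applying this to the difference of two solutions.
-/

open LinearMap

def LinearPMap.image {R E F : Type*} [Ring R] [AddCommGroup E] [Module R E] [AddCommGroup F]
    [Module R F] (f : E →ₗ.[R] F) (p : Submodule R E) : Submodule R F :=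
  (p.comap f.domain.subtype).map f.toFun

section AdjointPair

variable {R X : Type*} [CommRing R] [AddCommGroup X] [Module R X] (B : X →ₗ[R] X →ₗ[R] R)

theorem apply_one_add_eq_apply_one_add_adjoint {C C' : X →ₗ[R] X}
    (hCadj : ∀ u v, B (C u) v = B u (C' v)) (u w : X) :
    B ((1 + C) u) w = B u ((1 + C') w) := by
  simp [hCadj]

variable {B} (hBdef : ∀ w, B w w = 0 → w = 0)
include hBdef

theorem eq_zero_of_mem_ker_one_add_of_mem_range_one_add_adjoint {C C' : X →ₗ[R] X}
    (hCadj : ∀ u v, B (C u) v = B u (C' v)) {u : X}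
    (hker : u ∈ ker (1 + C)) (hrange : u ∈ range (1 + C')) : u = 0 := by
  obtain ⟨u', rfl⟩ := hrange
  apply hBdef
  rw [← apply_one_add_eq_apply_one_add_adjoint B hCadj, mem_ker.mp hker, map_zero,
    LinearMap.zero_apply]

theorem eq_zero_of_apply_mem_range_one_add_of_mem_image_ker_one_add_adjoint
    {C C' : X →ₗ[R] X} (hCadj : ∀ u v, B (C u) v = B u (C' v)) {M M' : X →ₗ.[R] X}
    (hMadj : ∀ (v : M.domain) (v' : M'.domain), B (M v) v' = B v (M' v'))
    {v : M.domain} (hrange : M v ∈ range (1 + C)) (himage : (v : X) ∈ M'.image (ker (1 + C'))) :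
    v = 0 := by
  obtain ⟨x, hx⟩ := hrange
  obtain ⟨w, hw : (1 + C') w = 0, hvw⟩ := Submodule.mem_map.mp himage
  have hBvv : B v v = 0 := by
    calc B v v = B v (M' w) := by rw [← hvw]; rfl
      _ = B ((1 + C) x) w := by rw [← hMadj, hx]
      _ = 0 := by
        rw [apply_one_add_eq_apply_one_add_adjoint B hCadj, hw, map_zero]
  exact Subtype.ext (hBdef _ hBvv)

theorem eq_zero_of_one_add_apply_add_apply_eq_zero {C C' : X →ₗ[R] X}
    (hCadj : ∀ u v, B (C u) v = B u (C' v)) {M M' : X →ₗ.[R] X}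
    (hMadj : ∀ (v : M.domain) (v' : M'.domain), B (M v) v' = B v (M' v'))
    {u : X} {v : M.domain} (hu : u ∈ range (1 + C')) (hv : (v : X) ∈ M'.image (ker (1 + C')))
    (h : (1 + C) u + M v = 0) : u = 0 ∧ v = 0 := by
  have hMv : M v ∈ range (1 + C) := ⟨-u, by rw [map_neg, neg_eq_of_add_eq_zero_right h]⟩
  have hv0 : v = 0 :=
    eq_zero_of_apply_mem_range_one_add_of_mem_image_ker_one_add_adjoint hBdef hCadj hMadj hMv hv
  rw [hv0, M.map_zero, add_zero] at h
  exact ⟨eq_zero_of_mem_ker_one_add_of_mem_range_one_add_adjoint hBdef hCadj h hu, hv0⟩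

end AdjointPair

theorem indefinite_equation_uniqueness_general
    {X : Type*} [NormedAddCommGroup X] [NormedSpace ℂ X]
    (B : X →ₗ[ℂ] X →ₗ[ℂ] ℂ)
    (hBdef : ∀ w : X, B w w = 0 → w = 0)
    (C C' : X →L[ℂ] X)
    (hCadj : ∀ u v : X, B (C u) v = B u (C' v))
    (M M' : X →ₗ.[ℂ] X)
    (hMadj : ∀ (v : M.domain) (v' : M'.domain), B (M v) v' = B v (M' v'))
    (f : X)
    (u₁ u₂ v₁ v₂ : X)
    (hu₁ : ∃ u' : X, u₁ = u' + C' u') (hu₂ : ∃ u' : X, u₂ = u' + C' u')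
    (hv₁ : ∃ w : M'.domain, ((w : X) + C' w = 0) ∧ v₁ = M' w)
    (hv₂ : ∃ w : M'.domain, ((w : X) + C' w = 0) ∧ v₂ = M' w)
    (hv₁dom : v₁ ∈ M.domain) (hv₂dom : v₂ ∈ M.domain)
    (heq₁ : u₁ + C u₁ + M ⟨v₁, hv₁dom⟩ = f)
    (heq₂ : u₂ + C u₂ + M ⟨v₂, hv₂dom⟩ = f) :
    u₁ = u₂ ∧ v₁ = v₂ := by
  have mem_range (x : X) (hx : ∃ u' : X, x = u' + C' u') : x ∈ range (1 + (C' : X →ₗ[ℂ] X)) :=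
    let ⟨u', hu'⟩ := hx; ⟨u', hu'.symm⟩
  have mem_image (x : X) (hx : ∃ w : M'.domain, ((w : X) + C' w = 0) ∧ x = M' w) :
      x ∈ M'.image (ker (1 + (C' : X →ₗ[ℂ] X))) :=
    let ⟨w, hw, hxw⟩ := hx; ⟨w, hw, hxw.symm⟩
  have homogeneous :
      (1 + (C : X →ₗ[ℂ] X)) (u₁ - u₂) + M (⟨v₁, hv₁dom⟩ - ⟨v₂, hv₂dom⟩) = 0 := by
    simp only [map_sub, M.map_sub, LinearMap.add_apply, Module.End.one_apply,
      ContinuousLinearMap.coe_coe]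
    linear_combination (norm := abel) heq₁ - heq₂
  obtain ⟨hu, hv⟩ := eq_zero_of_one_add_apply_add_apply_eq_zero hBdef hCadj hMadj
    (sub_mem (mem_range u₁ hu₁) (mem_range u₂ hu₂))
    (sub_mem (mem_image v₁ hv₁) (mem_image v₂ hv₂)) homogeneous
  exact ⟨sub_eq_zero.mp hu, congrArg Subtype.val (sub_eq_zero.mp hv)⟩

/-- Uniqueness assertion of Theorem 2: solutions of `(I + C) u + M v = f` with
`u ∈ range (I + C')` and `v ∈ M'[ker (I + C')]` are unique in
`range (I + C') × M'[ker (I + C')]`. -/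
theorem indefinite_equation_uniqueness
    {X : Type*} [NormedAddCommGroup X] [NormedSpace ℂ X] [CompleteSpace X]
    (B : X →ₗ[ℂ] X →ₗ[ℂ] ℂ)
    (hBdef : ∀ w : X, B w w = 0 → w = 0)
    (C C' : X →L[ℂ] X) (hC : IsCompactOperator C) (hC' : IsCompactOperator C')
    (hCadj : ∀ u v : X, B (C u) v = B u (C' v))
    (M M' : X →ₗ.[ℂ] X)
    (hMdense : Dense (M.domain : Set X)) (hMclosed : M.IsClosed)
    (hMadj : ∀ (v : M.domain) (v' : M'.domain), B (M v) v' = B v (M' v'))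
    (f : X)
    (u₁ u₂ v₁ v₂ : X)
    (hu₁ : ∃ u' : X, u₁ = u' + C' u') (hu₂ : ∃ u' : X, u₂ = u' + C' u')
    (hv₁ : ∃ w : M'.domain, ((w : X) + C' w = 0) ∧ v₁ = M' w)
    (hv₂ : ∃ w : M'.domain, ((w : X) + C' w = 0) ∧ v₂ = M' w)
    (hv₁dom : v₁ ∈ M.domain) (hv₂dom : v₂ ∈ M.domain)
    (heq₁ : u₁ + C u₁ + M ⟨v₁, hv₁dom⟩ = f)
    (heq₂ : u₂ + C u₂ + M ⟨v₂, hv₂dom⟩ = f) :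
    u₁ = u₂ ∧ v₁ = v₂ :=
  indefinite_equation_uniqueness_general B hBdef C C' hCadj M M' hMadj f u₁ u₂ v₁ v₂ hu₁ hu₂ hv₁ hv₂
    hv₁dom hv₂dom heq₁ heq₂
end
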